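/- arXiv:2604.17369 — 5 statements merged into one kernel-verified Lean document; each statement's English description precedes it below -/
import Mathlib

section
/- Let M be a positive semidefinite operator on a finite-dimensional complex Hilbert space, and let |ψ⟩ be a vector in the support (range) of M. Then M ≥ |ψ⟩⟨ψ| in the Löwner order if and only if ⟨ψ| M⁻¹ |ψ⟩ ≤ 1, where M⁻¹ denotes the Moore–Penrose pseudoinverse of M. -/
/-!
Write `ψ = M v`. From `M M⁻ M = M` and `Mᴴ = M` one gets `⟨ψ|M⁻|ψ⟩ = ⟨v|M|v⟩ =: t` and
`⟨ψ|x⟩ = ⟨v|M|x⟩`. Testing `M - |ψ⟩⟨ψ|` on `v` gives `t - t² ≥ 0`, hence `t ≤ 1`. Conversely,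
Cauchy–Schwarz for the semi-inner product `⟨x|M|y⟩` gives `|⟨ψ|x⟩|² ≤ t ⟨x|M|x⟩ ≤ ⟨x|M|x⟩`.
-/

open ComplexOrder Matrix

namespace Matrix

section CommSemiring

variable {n R : Type*} [Fintype n] [CommSemiring R] [StarRing R]

theorem IsHermitian.star_mulVec_dotProduct {M : Matrix n n R} (hM : M.IsHermitian)
    (v x : n → R) : star (M *ᵥ v) ⬝ᵥ x = star v ⬝ᵥ (M *ᵥ x) := by
  rw [star_mulVec, hM.eq, dotProduct_mulVec]

theorem IsHermitian.star_mulVec_dotProduct_mulVec_mulVec {M G : Matrix n n R}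
    (hM : M.IsHermitian) (hG : M * G * M = M) (v : n → R) :
    star (M *ᵥ v) ⬝ᵥ (G *ᵥ (M *ᵥ v)) = star v ⬝ᵥ (M *ᵥ v) := by
  rw [hM.star_mulVec_dotProduct, mulVec_mulVec, mulVec_mulVec, hG]

end CommSemiring

variable {n 𝕜 : Type*} [Fintype n] [RCLike 𝕜]

theorem dotProduct_vecMulVec_star_mulVec (ψ x : n → 𝕜) :
    star x ⬝ᵥ (vecMulVec ψ (star ψ) *ᵥ x) = ((‖star ψ ⬝ᵥ x‖ ^ 2 : ℝ) : 𝕜) := by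
  rw [vecMulVec_mulVec, dotProduct_smul, MulOpposite.smul_eq_mul_unop, MulOpposite.unop_op,
    mul_comm, star_dotProduct x ψ, RCLike.ofReal_pow]
  exact RCLike.mul_conj _

theorem PosSemidef.norm_dotProduct_mulVec_sq_le {M : Matrix n n 𝕜} (hM : M.PosSemidef)
    (x y : n → 𝕜) :
    ‖star x ⬝ᵥ (M *ᵥ y)‖ ^ 2 ≤
      RCLike.re (star x ⬝ᵥ (M *ᵥ x)) * RCLike.re (star y ⬝ᵥ (M *ᵥ y)) := by
  let := M.toSeminormedAddCommGroup hM
  let := M.toInnerProductSpace hM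
  have hinner (a b : n → 𝕜) : inner 𝕜 a b = star a ⬝ᵥ (M *ᵥ b) := dotProduct_comm _ _
  have := inner_mul_inner_self_le (𝕜 := 𝕜) x y
  rwa [← inner_conj_symm y x, RCLike.norm_conj, ← sq, hinner, hinner, hinner] at this

theorem PosSemidef.posSemidef_sub_vecMulVec_mulVec_iff {M : Matrix n n 𝕜} (hM : M.PosSemidef)
    (v : n → 𝕜) :
    (M - vecMulVec (M *ᵥ v) (star (M *ᵥ v))).PosSemidef ↔ star v ⬝ᵥ (M *ᵥ v) ≤ 1 := by
  have hquad (x : n → 𝕜) : star x ⬝ᵥ ((M - vecMulVec (M *ᵥ v) (star (M *ᵥ v))) *ᵥ x) =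
      star x ⬝ᵥ (M *ᵥ x) - ((‖star v ⬝ᵥ (M *ᵥ x)‖ ^ 2 : ℝ) : 𝕜) := by
    rw [sub_mulVec, dotProduct_sub, dotProduct_vecMulVec_star_mulVec,
      hM.isHermitian.star_mulVec_dotProduct]
  obtain ⟨t, ht0, ht⟩ := RCLike.nonneg_iff_exists_ofReal.1 (hM.dotProduct_mulVec_nonneg v)
  rw [posSemidef_iff_dotProduct_mulVec, ← ht, ← RCLike.ofReal_one, RCLike.ofReal_le_ofReal]
  simp only [hM.isHermitian.sub (posSemidef_vecMulVec_self_star _).isHermitian, true_and, hquad]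
  constructor
  · intro h
    have hv := h v
    rw [← ht, ← RCLike.ofReal_sub, RCLike.ofReal_nonneg, RCLike.norm_ofReal, sq_abs] at hv
    nlinarith
  · intro ht1 x
    obtain ⟨q, hq0, hq⟩ := RCLike.nonneg_iff_exists_ofReal.1 (hM.dotProduct_mulVec_nonneg x)
    have hcs := hM.norm_dotProduct_mulVec_sq_le v x
    rw [← ht, ← hq, RCLike.ofReal_re, RCLike.ofReal_re] at hcs
    rw [← hq, ← RCLike.ofReal_sub, RCLike.ofReal_nonneg]
    nlinarith

end Matrix

theorem psd_rankOne_le_iff_pinv_general {n : Type*} [Fintype n]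
    (M Minv : Matrix n n ℂ) (hM : M.PosSemidef)
    (h1 : M * Minv * M = M)
    (ψ : n → ℂ) (hψ : ∃ v, M.mulVec v = ψ) :
    (M - Matrix.vecMulVec ψ (star ψ)).PosSemidef ↔ star ψ ⬝ᵥ Minv.mulVec ψ ≤ 1 := by
  obtain ⟨v, rfl⟩ := hψ
  rw [hM.isHermitian.star_mulVec_dotProduct_mulVec_mulVec h1,
    hM.posSemidef_sub_vecMulVec_mulVec_iff]

/-- Let `M` be positive semidefinite on a finite-dimensional complex Hilbert space,
`Minv` its Moore–Penrose pseudoinverse (characterized by the four Penrose axioms),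
and `ψ` a vector in the range of `M`.  Then `M ≥ |ψ⟩⟨ψ|` in the Löwner order iff
`⟨ψ|M⁻¹|ψ⟩ ≤ 1`. -/
theorem psd_rankOne_le_iff_pinv {n : Type*} [Fintype n] [DecidableEq n]
    (M Minv : Matrix n n ℂ) (hM : M.PosSemidef)
    (h1 : M * Minv * M = M) (h2 : Minv * M * Minv = Minv)
    (h3 : (M * Minv)ᴴ = M * Minv) (h4 : (Minv * M)ᴴ = Minv * M)
    (ψ : n → ℂ) (hψ : ∃ v, M.mulVec v = ψ) :
    (M - Matrix.vecMulVec ψ (star ψ)).PosSemidef ↔ star ψ ⬝ᵥ Minv.mulVec ψ ≤ 1 :=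
  psd_rankOne_le_iff_pinv_general M Minv hM h1 ψ hψ
end

section
/- Let M be a square complex matrix with M² = 0. Then the trace norm satisfies ‖M + M†‖₁ = 2‖M‖₁. -/
/-!
Since `M² = 0` also `(Mᴴ)² = 0`, so `(M + Mᴴ)ᴴ (M + Mᴴ) = M Mᴴ + Mᴴ M`, a sum of two positive
semidefinite matrices whose product `M (Mᴴ)² M` vanishes. Positive matrices with zero product
have square roots with zero product, hence `√(M Mᴴ + Mᴴ M) = √(M Mᴴ) + √(Mᴴ M)`. Taking traces
gives `‖M + Mᴴ‖₁ = ‖Mᴴ‖₁ + ‖M‖₁`, and `‖Mᴴ‖₁ = ‖M‖₁` because `M Mᴴ` and `Mᴴ M` have the same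
characteristic polynomial, hence the same eigenvalues.
-/

open Matrix ComplexOrder

/-- The trace norm (Schatten 1-norm) of a complex square matrix: `‖A‖₁ = tr √(AᴴA)`. -/
noncomputable def traceNorm {n : Type*} [Fintype n] [DecidableEq n] (A : Matrix n n ℂ) : ℝ :=
  (((Matrix.posSemidef_conjTranspose_mul_self A).1.eigenvectorUnitary.1 *
      diagonal (((↑) : ℝ → ℂ) ∘ (√·) ∘ (Matrix.posSemidef_conjTranspose_mul_self A).1.eigenvalues) *
      (star (Matrix.posSemidef_conjTranspose_mul_self A).1.eigenvectorUnitary : Matrix n n ℂ)).trace).re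

namespace Matrix

open scoped MatrixOrder

variable {n 𝕜 : Type*} [Fintype n] [DecidableEq n] [RCLike 𝕜]

lemma sqrt_mul_sqrt_eq_zero_of_mul_eq_zero {A B : Matrix n n 𝕜} (hA : 0 ≤ A) (hB : 0 ≤ B)
    (hAB : A * B = 0) : CFC.sqrt A * CFC.sqrt B = 0 := by
  have hsA : (CFC.sqrt A)ᴴ = CFC.sqrt A := (CFC.sqrt_nonneg A).posSemidef.1
  have hsB : (CFC.sqrt B)ᴴ = CFC.sqrt B := (CFC.sqrt_nonneg B).posSemidef.1
  have hsqrtA_mul : CFC.sqrt A * B = 0 := by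
    rwa [← conjTranspose_mul_self_mul_eq_zero, hsA, CFC.sqrt_mul_sqrt_self A]
  rwa [← hsB, ← mul_conjTranspose_mul_self_eq_zero, hsB, CFC.sqrt_mul_sqrt_self B]

lemma sqrt_add_of_mul_eq_zero {A B : Matrix n n 𝕜} (hA : 0 ≤ A) (hB : 0 ≤ B)
    (hAB : A * B = 0) : CFC.sqrt (A + B) = CFC.sqrt A + CFC.sqrt B := by
  have hst : CFC.sqrt A * CFC.sqrt B = 0 := sqrt_mul_sqrt_eq_zero_of_mul_eq_zero hA hB hAB
  have hts : CFC.sqrt B * CFC.sqrt A = 0 := by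
    have := congrArg conjTranspose hst
    rwa [conjTranspose_mul, (CFC.sqrt_nonneg A).posSemidef.1, (CFC.sqrt_nonneg B).posSemidef.1,
      conjTranspose_zero] at this
  refine (CFC.sqrt_eq_iff _ _ (add_nonneg hA hB)
    (add_nonneg (CFC.sqrt_nonneg A) (CFC.sqrt_nonneg B))).2 ?_
  rw [add_mul, mul_add, mul_add, hst, hts, CFC.sqrt_mul_sqrt_self A, CFC.sqrt_mul_sqrt_self B,
    add_zero, zero_add]

end Matrix

section TraceNorm

open scoped MatrixOrder

variable {n : Type*} [Fintype n] [DecidableEq n]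

lemma traceNorm_eq_re_trace_sqrt (A : Matrix n n ℂ) :
    traceNorm A = (CFC.sqrt (Aᴴ * A)).trace.re := by
  have hA := posSemidef_conjTranspose_mul_self A
  rw [CFC.sqrt_eq_cfc, cfc_nnreal_eq_real _ _, hA.1.cfc_eq, IsHermitian.cfc,
    Unitary.conjStarAlgAut_apply, traceNorm]
  congr 5
  funext i
  simp [max_eq_left (hA.eigenvalues_nonneg i)]

lemma traceNorm_eq_sum_sqrt_eigenvalues (A : Matrix n n ℂ) :
    traceNorm A = ∑ i, √((posSemidef_conjTranspose_mul_self A).1.eigenvalues i) := by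
  rw [traceNorm, trace_mul_comm, ← mul_assoc,
    (mem_unitaryGroup_iff').mp (posSemidef_conjTranspose_mul_self A).1.eigenvectorUnitary.2,
    one_mul, trace_diagonal, Complex.re_sum]
  simp

lemma traceNorm_conjTranspose (A : Matrix n n ℂ) : traceNorm Aᴴ = traceNorm A := by
  simp only [traceNorm_eq_sum_sqrt_eigenvalues]
  rw [((posSemidef_conjTranspose_mul_self Aᴴ).1.eigenvalues_eq_eigenvalues_iff
    (posSemidef_conjTranspose_mul_self A).1).2]
  rw [conjTranspose_conjTranspose, charpoly_mul_comm]

end TraceNorm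

open scoped MatrixOrder in
/-- If `M` is a square complex matrix with `M² = 0`, then `‖M + Mᴴ‖₁ = 2‖M‖₁`. -/
theorem traceNorm_add_conjTranspose_of_sq_eq_zero {n : Type*} [Fintype n] [DecidableEq n]
    (M : Matrix n n ℂ) (hM : M * M = 0) :
    traceNorm (M + Mᴴ) = 2 * traceNorm M := by
  have hMH : Mᴴ * Mᴴ = 0 := by rw [← conjTranspose_mul, hM, conjTranspose_zero]
  have hsq : (M + Mᴴ)ᴴ * (M + Mᴴ) = M * Mᴴ + Mᴴ * M := by
    simp only [conjTranspose_add, conjTranspose_conjTranspose, add_mul, mul_add, hM, hMH]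
    abel
  have horth : M * Mᴴ * (Mᴴ * M) = 0 := by
    rw [mul_assoc, ← mul_assoc Mᴴ, hMH, zero_mul, mul_zero]
  have hsqrt := sqrt_add_of_mul_eq_zero (posSemidef_self_mul_conjTranspose M).nonneg
    (posSemidef_conjTranspose_mul_self M).nonneg horth
  calc traceNorm (M + Mᴴ)
      = (CFC.sqrt (Mᴴᴴ * Mᴴ)).trace.re + (CFC.sqrt (Mᴴ * M)).trace.re := by
        rw [traceNorm_eq_re_trace_sqrt, hsq, hsqrt, conjTranspose_conjTranspose, trace_add,
          Complex.add_re]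
    _ = 2 * traceNorm M := by
        rw [← traceNorm_eq_re_trace_sqrt, ← traceNorm_eq_re_trace_sqrt, traceNorm_conjTranspose]
        ring
end

section
/- Let d ≥ 2, let d' = 2·⌊d/2⌋, let ε ∈ (0,1/2), let V₀ be the d×d (padded into D×d, D ≥ d) matrix equal to √(1−ε²) times the projection onto the first d' basis vectors plus (if d is odd) the rank-one term |d⟩⟨d|, and let Δ = i·(Σ_{j=1}^{⌊d/2⌋} |j⟩⟨j| − Σ_{j=⌊d/2⌋+1}^{d'} |j⟩⟨j|). Then for any unitary U of size d' (acting on the span of the first d' basis vectors and trivially elsewhere), the matrix V = V₀ + ε·U Δ U† satisfies V†V = I_d, i.e., V is an isometry. Moreover tr(V₀† Δ) = 0. -/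
open Matrix

/-!
Let `E : Fin d → Fin D` be the coordinate embedding, viewed as a `D × d` matrix. Then `V₀ = E S`
and `Δ = E Λ` with `S`, `Λ` diagonal, and since `U` is the identity beyond the first `d'`
coordinates, `U E = E U_d` for the leading `d × d` block `U_d`, which is again unitary. So
`V = E (S + ε A)` with `A = U_d Λ U_dᴴ`, and `VᴴV = (S + ε A)ᴴ (S + ε A)`. Here `A` is
skew-Hermitian, commutes with `S` (both respect the splitting at `d'`), and `A² = -P` for the
projection `P` onto the first `d'` coordinates; hence `VᴴV = S² + ε² P = 1`, as
`S² = (1 - ε²) P + (1 - P)`. Finally `tr (V₀ᴴ Δ) = √(1 - ε²) · tr Λ = 0`, since `Λ` carries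
`i` and `-i` equally often.
-/

theorem star_add_smul_mul_add_smul {K R : Type*} [CommSemiring K] [StarRing K] [Ring R]
    [StarRing R] [Algebra K R] [StarModule K R] {s a : R} (hs : IsSelfAdjoint s)
    (ha : star a = -a) (hsa : Commute s a) {c : K} (hc : IsSelfAdjoint c) :
    star (s + c • a) * (s + c • a) = s * s - (c * c) • (a * a) := by
  rw [star_add, star_smul, hs.star_eq, hc.star_eq, ha, smul_neg, ← sub_eq_add_neg, sub_mul,
    mul_add, mul_add, smul_mul_assoc, smul_mul_assoc, mul_smul_comm, mul_smul_comm, smul_smul,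
    hsa.eq]
  abel

section Embedding

variable {m n α : Type*} [Fintype m] [DecidableEq m] [DecidableEq n] {f : n → m}

theorem Matrix.conjTranspose_submatrix_one_mul_self [Semiring α] [StarRing α]
    (hf : Function.Injective f) :
    ((1 : Matrix m m α).submatrix id f)ᴴ * (1 : Matrix m m α).submatrix id f = 1 := by
  rw [conjTranspose_submatrix, conjTranspose_one]
  exact (one_submatrix_mul f (Equiv.refl m) _).trans (submatrix_one f hf)

theorem Matrix.conjTranspose_submatrix_one_mul_mul [Fintype n] {l o : Type*} [CommSemiring α]
    [StarRing α] (hf : Function.Injective f) (M : Matrix n l α) (N : Matrix n o α) :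
    ((1 : Matrix m m α).submatrix id f * M)ᴴ * ((1 : Matrix m m α).submatrix id f * N) =
      Mᴴ * N := by
  rw [conjTranspose_mul, Matrix.mul_assoc, ← Matrix.mul_assoc ((1 : Matrix m m α).submatrix id f)ᴴ,
    conjTranspose_submatrix_one_mul_self hf, Matrix.one_mul]

theorem Matrix.mul_submatrix_one_eq_submatrix_one_mul [Fintype n] [Semiring α]
    (hf : Function.Injective f) {U : Matrix m m α}
    (hUf : ∀ i ∉ Set.range f, ∀ j, U i (f j) = 0) :
    U * (1 : Matrix m m α).submatrix id f =
      (1 : Matrix m m α).submatrix id f * U.submatrix f f := by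
  have hUE : U * (1 : Matrix m m α).submatrix id f = U.submatrix id f :=
    mul_submatrix_one (Equiv.refl m) f U
  rw [hUE]
  ext i j
  by_cases hi : i ∈ Set.range f
  · obtain ⟨k, rfl⟩ := hi
    simp [mul_apply, one_apply, hf.eq_iff]
  · simp only [submatrix_apply, id_eq, hUf i hi j, mul_apply, one_apply, ite_mul, one_mul,
      zero_mul]
    exact (Finset.sum_eq_zero fun k _ => if_neg fun (h : i = f k) => hi ⟨k, h.symm⟩).symm

theorem Matrix.submatrix_mem_unitaryGroup [Fintype n] [CommRing α] [StarRing α]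
    (hf : Function.Injective f) {U : Matrix m m α} (hU : U ∈ unitaryGroup m α)
    (hUf : ∀ i ∉ Set.range f, ∀ j, U i (f j) = 0) : U.submatrix f f ∈ unitaryGroup n α := by
  set E := (1 : Matrix m m α).submatrix id f
  have hUU : Uᴴ * U = 1 := mem_unitaryGroup_iff'.mp hU
  rw [mem_unitaryGroup_iff', star_eq_conjTranspose]
  calc (U.submatrix f f)ᴴ * U.submatrix f f
      = (E * U.submatrix f f)ᴴ * (E * U.submatrix f f) :=
        (conjTranspose_submatrix_one_mul_mul hf _ _).symm
    _ = Eᴴ * (Uᴴ * U) * E := by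
        rw [← mul_submatrix_one_eq_submatrix_one_mul hf hUf, conjTranspose_mul]
        simp only [E, Matrix.mul_assoc]
    _ = 1 := by rw [hUU, Matrix.mul_one, conjTranspose_submatrix_one_mul_self hf]

end Embedding

theorem Matrix.eq_submatrix_one_mul_diagonal {α : Type*} [Semiring α] {d D : ℕ} (h : d ≤ D)
    {M : Matrix (Fin D) (Fin d) α} {g : Fin d → α}
    (hM : ∀ i j, M i j = if (i : ℕ) = (j : ℕ) then g j else 0) :
    M = (1 : Matrix (Fin D) (Fin D) α).submatrix id (Fin.castLE h) * diagonal g := by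
  ext i j
  simp [hM, mul_diagonal, one_apply, Fin.ext_iff]

section LeadingBlock

variable {α : Type*} [Zero α] [One α] {k d D : ℕ} {U : Matrix (Fin D) (Fin D) α}

theorem Matrix.apply_castLE_eq_zero_of_eq_one_off_block (hk : k ≤ d) (hdD : d ≤ D)
    (hU : ∀ i j : Fin D, (k ≤ (i : ℕ) ∨ k ≤ (j : ℕ)) → U i j = if i = j then 1 else 0) :
    ∀ i ∉ Set.range (Fin.castLE hdD), ∀ j, U i (Fin.castLE hdD j) = 0 := by
  intro i hi j
  have hid : d ≤ (i : ℕ) := by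
    by_contra! h
    exact hi ⟨⟨i, h⟩, rfl⟩
  rw [hU _ _ (Or.inl (by omega)), if_neg (fun h => by simp [h] at hid; omega)]

theorem Matrix.lt_iff_lt_of_eq_one_off_block (hdD : d ≤ D)
    (hU : ∀ i j : Fin D, (k ≤ (i : ℕ) ∨ k ≤ (j : ℕ)) → U i j = if i = j then 1 else 0)
    (i j : Fin d) (hij : U.submatrix (Fin.castLE hdD) (Fin.castLE hdD) i j ≠ 0) :
    (i : ℕ) < k ↔ (j : ℕ) < k := by
  by_contra hk
  refine hij ?_
  rw [submatrix_apply, hU _ _ (by simp only [Fin.val_castLE]; omega),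
    if_neg (fun h => hk (by simp_all [Fin.castLE_inj]))]

end LeadingBlock

theorem Matrix.commute_diagonal_ite_of_apply_ne_zero {ι α : Type*} [Fintype ι] [DecidableEq ι]
    [CommSemiring α] (p : ι → Prop) [DecidablePred p] {M : Matrix ι ι α}
    (hM : ∀ i j, M i j ≠ 0 → (p i ↔ p j)) (a b : α) :
    Commute M (diagonal fun i => if p i then a else b) := by
  ext i j
  rw [mul_diagonal, diagonal_mul]
  rcases eq_or_ne (M i j) 0 with h | h
  · simp [h]
  · rw [if_congr (hM i j h) rfl rfl, mul_comm]

theorem Matrix.diagonal_add_smul_unitary_conj_mem_unitaryGroup {ι : Type*} [Fintype ι]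
    [DecidableEq ι] (p : ι → Prop) [DecidablePred p] {c ε : ℝ} (hcε : c ^ 2 + ε ^ 2 = 1) {η : ι → ℂ}
    (hη_star : ∀ i, star (η i) = -η i) (hη_sq : ∀ i, η i * η i = if p i then -1 else 0)
    {W : Matrix ι ι ℂ} (hW : W ∈ unitaryGroup ι ℂ) (hWp : ∀ i j, W i j ≠ 0 → (p i ↔ p j)) :
    diagonal (fun i => if p i then (c : ℂ) else 1) + (ε : ℂ) • (W * diagonal η * Wᴴ)
      ∈ unitaryGroup ι ℂ := by
  set S := diagonal (fun i => if p i then (c : ℂ) else 1)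
  set P : Matrix ι ι ℂ := diagonal (fun i => if p i then 1 else 0)
  set A := W * diagonal η * Wᴴ
  have hWhp : ∀ i j, Wᴴ i j ≠ 0 → (p i ↔ p j) := fun i j h =>
    (hWp j i fun h' => h (by simp [h'])).symm
  have hS : IsSelfAdjoint S := by
    rw [IsSelfAdjoint, star_eq_conjTranspose, diagonal_conjTranspose]
    congr 1; funext i; by_cases hi : p i <;> simp [hi]
  have hA : star A = -A := by
    have hηs : diagonal (star η) = -diagonal η := by
      rw [diagonal_neg]; exact congrArg diagonal (funext hη_star)
    rw [star_eq_conjTranspose, conjTranspose_mul, conjTranspose_mul, conjTranspose_conjTranspose,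
      diagonal_conjTranspose, ← Matrix.mul_assoc, hηs, Matrix.mul_neg, Matrix.neg_mul]
  have hSA : Commute S A :=
    ((commute_diagonal_ite_of_apply_ne_zero p hWp _ _).symm.mul_right
      (commute_diagonal _ _)).mul_right (commute_diagonal_ite_of_apply_ne_zero p hWhp _ _).symm
  have hAA : A * A = -P := by
    have hηη : diagonal η * diagonal η = -P := by
      rw [diagonal_mul_diagonal, diagonal_neg]
      congr 1; funext i; rw [hη_sq]; split_ifs <;> simp
    have hWhW : Wᴴ * W = 1 := mem_unitaryGroup_iff'.mp hW
    have hWWh : W * Wᴴ = 1 := mem_unitaryGroup_iff.mp hW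
    calc A * A = W * (diagonal η * (Wᴴ * W) * diagonal η) * Wᴴ := by
          simp only [A, Matrix.mul_assoc]
      _ = -(W * P * Wᴴ) := by
        rw [hWhW, Matrix.mul_one, hηη, Matrix.mul_neg, Matrix.neg_mul]
      _ = -P := by
        rw [(commute_diagonal_ite_of_apply_ne_zero p hWp _ _).eq, Matrix.mul_assoc, hWWh,
          Matrix.mul_one]
  have hcε' : (c : ℂ) * c + ε * ε = 1 := by
    exact_mod_cast (by linear_combination hcε : c * c + ε * ε = 1)
  rw [mem_unitaryGroup_iff', star_add_smul_mul_add_smul hS hA hSA (Complex.conj_ofReal ε), hAA,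
    smul_neg, sub_neg_eq_add, diagonal_mul_diagonal, ← diagonal_smul, diagonal_add,
    ← diagonal_one]
  congr 1; funext i; by_cases hi : p i <;> simp [hi, hcε']

/-- The diagonal of `Δ`, for `n = ⌊d/2⌋`. -/
def typeIPhase (n k : ℕ) : ℂ := if k < n then Complex.I else if k < 2 * n then -Complex.I else 0

theorem star_typeIPhase (n k : ℕ) : star (typeIPhase n k) = -typeIPhase n k := by
  unfold typeIPhase; split_ifs <;> simp

theorem typeIPhase_mul_self (n k : ℕ) :
    typeIPhase n k * typeIPhase n k = if k < 2 * n then -1 else 0 := by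
  unfold typeIPhase; split_ifs <;> first | omega | simp

theorem typeIPhase_eq_zero {n k : ℕ} (h : 2 * n ≤ k) : typeIPhase n k = 0 := by
  rw [typeIPhase, if_neg (by omega), if_neg (by omega)]

theorem sum_range_typeIPhase {n d : ℕ} (h : 2 * n ≤ d) :
    ∑ k ∈ Finset.range d, typeIPhase n k = 0 := by
  obtain ⟨r, rfl⟩ := Nat.exists_eq_add_of_le h
  have htail : ∀ k ∈ Finset.range r, typeIPhase n (2 * n + k) = 0 := fun k _ =>
    typeIPhase_eq_zero (by omega)
  rw [Finset.sum_range_add, Finset.sum_eq_zero htail, add_zero, two_mul, Finset.sum_range_add,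
    ← Finset.sum_add_distrib]
  refine Finset.sum_eq_zero fun k hk => ?_
  have hk := Finset.mem_range.mp hk
  simp [typeIPhase, hk, show n + k < 2 * n by omega]

theorem sum_mul_typeIPhase_eq_zero {n d : ℕ} (h : 2 * n ≤ d) {s : Fin d → ℂ} {a : ℂ}
    (hs : ∀ j : Fin d, (j : ℕ) < 2 * n → s j = a) :
    ∑ j : Fin d, s j * typeIPhase n j = 0 := by
  have hterm : ∀ j : Fin d, s j * typeIPhase n j = a * typeIPhase n j := by
    intro j
    by_cases hj : (j : ℕ) < 2 * n
    · rw [hs j hj]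
    · rw [typeIPhase_eq_zero (not_lt.mp hj), mul_zero, mul_zero]
  simp only [hterm, ← Finset.mul_sum, Fin.sum_univ_eq_sum_range (typeIPhase n) d,
    sum_range_typeIPhase h, mul_zero]

theorem typeI_isometry_general (d D : ℕ) (hdD : d ≤ D)
    (ε : ℝ) (hε0 : 0 < ε) (hε1 : ε < 1 / 2)
    (V₀ Δ : Matrix (Fin D) (Fin d) ℂ)
    (hV₀ : ∀ i j, V₀ i j = if (i : ℕ) = (j : ℕ) then
        (if (j : ℕ) < 2 * (d / 2) then (Real.sqrt (1 - ε ^ 2) : ℂ) else 1) else 0)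
    (hΔ : ∀ i j, Δ i j = if (i : ℕ) = (j : ℕ) then
        (if (j : ℕ) < d / 2 then Complex.I
         else if (j : ℕ) < 2 * (d / 2) then -Complex.I else 0) else 0)
    (U : Matrix (Fin D) (Fin D) ℂ) (hU : U ∈ Matrix.unitaryGroup (Fin D) ℂ)
    (hUtriv : ∀ i j : Fin D, (2 * (d / 2) ≤ (i : ℕ) ∨ 2 * (d / 2) ≤ (j : ℕ)) →
      U i j = if i = j then 1 else 0) :
    ((V₀ + (ε : ℂ) • (U * Δ * (U.submatrix (Fin.castLE hdD) (Fin.castLE hdD))ᴴ))ᴴ *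
        (V₀ + (ε : ℂ) • (U * Δ * (U.submatrix (Fin.castLE hdD) (Fin.castLE hdD))ᴴ)) = 1) ∧
    (V₀ᴴ * Δ).trace = 0 := by
  have hinj := Fin.castLE_injective hdD
  have hd' : 2 * (d / 2) ≤ d := Nat.mul_div_le d 2
  have hV₀E := eq_submatrix_one_mul_diagonal hdD hV₀
  have hΔE : Δ = (1 : Matrix (Fin D) (Fin D) ℂ).submatrix id (Fin.castLE hdD) *
      diagonal (fun j : Fin d => typeIPhase (d / 2) j) := eq_submatrix_one_mul_diagonal hdD hΔ
  have hUf := apply_castLE_eq_zero_of_eq_one_off_block hd' hdD hUtriv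
  have hcε : Real.sqrt (1 - ε ^ 2) ^ 2 + ε ^ 2 = 1 := by
    rw [Real.sq_sqrt (by nlinarith)]; ring
  refine ⟨?_, ?_⟩
  · rw [hV₀E, hΔE, ← Matrix.mul_assoc, mul_submatrix_one_eq_submatrix_one_mul hinj hUf,
      Matrix.mul_assoc, Matrix.mul_assoc, ← Matrix.mul_smul, ← Matrix.mul_add,
      conjTranspose_submatrix_one_mul_mul hinj, ← Matrix.mul_assoc, ← star_eq_conjTranspose,
      ← mem_unitaryGroup_iff']
    exact diagonal_add_smul_unitary_conj_mem_unitaryGroup _ hcε (fun _ => star_typeIPhase _ _)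
      (fun _ => typeIPhase_mul_self _ _) (submatrix_mem_unitaryGroup hinj hU hUf)
      (lt_iff_lt_of_eq_one_off_block hdD hUtriv)
  · rw [hV₀E, hΔE, conjTranspose_submatrix_one_mul_mul hinj, diagonal_conjTranspose,
      diagonal_mul_diagonal, trace_diagonal]
    exact sum_mul_typeIPhase_eq_zero (a := (Real.sqrt (1 - ε ^ 2) : ℂ)) hd' fun j hj => by
      simp [hj]

/-- Type I hard-instance construction: with `d' = 2⌊d/2⌋`,
`V₀ = √(1−ε²)·Σ_{j<d'} |j⟩⟨j| (+ |d⟩⟨d| if d is odd)` and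
`Δ = i(Σ_{j<⌊d/2⌋} |j⟩⟨j| − Σ_{⌊d/2⌋≤j<d'} |j⟩⟨j|)` (both padded to `D×d`),
for any unitary `U` acting on the span of the first `d'` basis vectors and trivially
elsewhere, `V = V₀ + ε·UΔU†` is an isometry; moreover `tr(V₀ᴴΔ) = 0`. -/
theorem typeI_isometry (d D : ℕ) (hd : 2 ≤ d) (hdD : d ≤ D)
    (ε : ℝ) (hε0 : 0 < ε) (hε1 : ε < 1 / 2)
    (V₀ Δ : Matrix (Fin D) (Fin d) ℂ)
    (hV₀ : ∀ i j, V₀ i j = if (i : ℕ) = (j : ℕ) then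
        (if (j : ℕ) < 2 * (d / 2) then (Real.sqrt (1 - ε ^ 2) : ℂ) else 1) else 0)
    (hΔ : ∀ i j, Δ i j = if (i : ℕ) = (j : ℕ) then
        (if (j : ℕ) < d / 2 then Complex.I
         else if (j : ℕ) < 2 * (d / 2) then -Complex.I else 0) else 0)
    (U : Matrix (Fin D) (Fin D) ℂ) (hU : U ∈ Matrix.unitaryGroup (Fin D) ℂ)
    (hUtriv : ∀ i j : Fin D, (2 * (d / 2) ≤ (i : ℕ) ∨ 2 * (d / 2) ≤ (j : ℕ)) →
      U i j = if i = j then 1 else 0) :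
    ((V₀ + (ε : ℂ) • (U * Δ * (U.submatrix (Fin.castLE hdD) (Fin.castLE hdD))ᴴ))ᴴ *
        (V₀ + (ε : ℂ) • (U * Δ * (U.submatrix (Fin.castLE hdD) (Fin.castLE hdD))ᴴ)) = 1) ∧
    (V₀ᴴ * Δ).trace = 0 :=
  typeI_isometry_general d D hdD ε hε0 hε1 V₀ Δ hV₀ hΔ U hU hUtriv
end

section
/- Let n ≥ m be positive integers, let H ≅ ℂ^d with orthonormal basis {|0⟩,…,|d−1⟩}, and let Π be a subspace of span{|1⟩,…,|d−1⟩} (hence orthogonal to |0⟩). Define A as the linear span in H^{⊗n} of all vectors Σ_{S⊆[n], |S|=m} |ψ⟩^{⊗S} ⊗ |0⟩^{⊗([n]∖S)} as |ψ⟩ ranges over Π, where |ψ⟩^{⊗S}⊗|0⟩^{⊗([n]∖S)} denotes the product vector with |ψ⟩ at positions in S and |0⟩ elsewhere. Then dim(A) = C(dim(Π) + m − 1, m). -/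
/-!
Restricting a tensor to the configurations in which the positions outside a fixed `m`-subset
carry `|0⟩` sends the symmetrized vector of `ψ ⊥ |0⟩` to `ψ^{⊗m}`. This restriction is injective on
the span `A`, because every element of `A` is permutation invariant and supported on the
configurations with exactly `m` non-vacuum positions. Hence `dim A = dim span {ψ^{⊗m} : ψ ∈ Π}`.
Writing `ψ = ∑ cⱼ bⱼ` in a basis of `Π`, the Kronecker power of the basis (injective, by a
biorthogonal family) identifies this span with `span {c^{⊗m} : c ∈ ℂᵏ}`. Each `c^{⊗m}` factors
through `Sym (Fin k) m` as `μ ↦ c^μ`, and these monomial functions span all of `Sym (Fin k) m → ℂ`,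
since a polynomial vanishing on `ℂᵏ` is zero. The dimension is `|Sym (Fin k) m| = C(k + m - 1, m)`.
-/

open Finset Function Module Submodule

section TensorPower

variable {R α : Type*} [CommSemiring R]

def tprodFun {m : ℕ} (x : Fin m → α → R) : (Fin m → α) → R := fun f => ∏ i, x i (f i)

def tensorPow (m : ℕ) (ψ : α → R) : (Fin m → α) → R := tprodFun fun _ => ψ

theorem dotProduct_tprodFun [Fintype α] {m : ℕ} (x y : Fin m → α → R) :
    tprodFun x ⬝ᵥ tprodFun y = ∏ i, x i ⬝ᵥ y i := by
  simp only [dotProduct, tprodFun, ← prod_mul_distrib]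
  exact (Fintype.prod_sum fun i a => x i a * y i a).symm

theorem tensorPow_linearCombination {ι : Type*} [Fintype ι] (m : ℕ) (B : ι → α → R)
    (c : ι → R) :
    tensorPow m (Fintype.linearCombination R B c) =
      Fintype.linearCombination R (fun g : Fin m → ι => tprodFun (B ∘ g)) (tensorPow m c) := by
  ext f
  simp [Fintype.linearCombination_apply, tensorPow, tprodFun, Finset.sum_apply, Fintype.prod_sum,
    prod_mul_distrib]

theorem linearIndependent_of_dotProduct_eq_ite [Fintype α] {κ : Type*} [Fintype κ]
    [DecidableEq κ] {v w : κ → α → R} (h : ∀ i j, w i ⬝ᵥ v j = if i = j then 1 else 0) :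
    LinearIndependent R v := by
  rw [Fintype.linearIndependent_iffₛ]
  intro a b hab i
  have hcoeff : ∀ a : κ → R, w i ⬝ᵥ ∑ j, a j • v j = a i := fun a => by
    simp [dotProduct_sum, dotProduct_smul, h]
  rw [← hcoeff a, hab, hcoeff b]

end TensorPower

section KroneckerPower

variable {K α ι : Type*} [Field K] [Fintype α] [DecidableEq α] [Fintype ι] [DecidableEq ι]

theorem LinearIndependent.exists_dotProduct_eq_ite {B : ι → α → K} (hB : LinearIndependent K B) :
    ∃ B' : ι → α → K, ∀ i j, B' i ⬝ᵥ B j = if i = j then 1 else 0 := by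
  obtain ⟨N, hN⟩ := (Fintype.linearCombination K B).exists_leftInverse_of_injective
    (LinearMap.ker_eq_bot.2 (linearIndependent_iff_injective_fintypeLinearCombination.1 hB))
  refine ⟨fun i a => N (fun b => if a = b then 1 else 0) i, fun i j => ?_⟩
  have hNB : N (B j) = Pi.single j 1 := by
    simpa using LinearMap.congr_fun hN (Pi.single j 1)
  calc _ = N (B j) i := by
        simp [dotProduct, N.pi_apply_eq_sum_univ (B j), Finset.sum_apply, mul_comm]
    _ = if i = j then 1 else 0 := by simp [hNB, Pi.single_apply]

theorem LinearIndependent.tprodFun_comp {B : ι → α → K} (hB : LinearIndependent K B) (m : ℕ) :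
    LinearIndependent K (fun g : Fin m → ι => tprodFun (B ∘ g)) := by
  obtain ⟨B', hB'⟩ := hB.exists_dotProduct_eq_ite
  refine linearIndependent_of_dotProduct_eq_ite (w := fun h => tprodFun (B' ∘ h)) fun h g => ?_
  simp only [dotProduct_tprodFun, comp_apply, hB', prod_boole, mem_univ, true_imp_iff, funext_iff]

end KroneckerPower

section Monomials

variable {R ι : Type*} {m : ℕ}

def symOfFn (g : Fin m → ι) : Sym ι m := ⟨univ.val.map g, by simp⟩

theorem symOfFn_surjective : Surjective (symOfFn : (Fin m → ι) → Sym ι m) := by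
  rintro ⟨s, hs⟩
  obtain ⟨l, rfl⟩ := Quot.exists_rep s
  have hl : l.length = m := hs
  subst hl
  exact ⟨l.get, Subtype.ext (by simp [symOfFn, Fin.univ_val_map])⟩

variable [CommSemiring R]

def monomialFun (c : ι → R) (μ : Sym ι m) : R := ((μ : Multiset ι).map c).prod

theorem monomialFun_symOfFn (c : ι → R) (g : Fin m → ι) :
    monomialFun c (symOfFn g) = tensorPow m c g := by
  simp [monomialFun, symOfFn, tensorPow, tprodFun, prod_eq_multiset_prod, comp_def]

theorem MvPolynomial.eval_monomial_toFinsupp [DecidableEq ι] (c : ι → R) (s : Multiset ι)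
    (a : R) :
    MvPolynomial.eval c (MvPolynomial.monomial (Multiset.toFinsupp s) a) = a * (s.map c).prod := by
  rw [MvPolynomial.eval_monomial, Finsupp.prod, Multiset.toFinsupp_support,
    Finset.prod_multiset_map_count]
  simp [Multiset.toFinsupp_apply]

end Monomials

section Dimension

variable {K α ι : Type*} [Field K] [Infinite K] [Fintype ι] [DecidableEq ι] {m : ℕ}

theorem span_range_monomialFun :
    span K (Set.range (monomialFun : (ι → K) → Sym ι m → K)) = ⊤ := by
  rw [← Submodule.dualAnnihilator_eq_bot_iff, eq_bot_iff]
  intro ξ hξ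
  rw [Submodule.mem_dualAnnihilator] at hξ
  set a : Sym ι m → K := fun μ => ξ (Pi.single μ 1)
  let p : MvPolynomial ι K :=
    ∑ μ : Sym ι m, MvPolynomial.monomial (Multiset.toFinsupp (μ : Multiset ι)) (a μ)
  have hp : p = 0 := MvPolynomial.funext fun c => by
    have h := hξ _ (subset_span ⟨c, rfl⟩)
    rw [pi_eq_sum_univ' (monomialFun c)] at h
    simpa [p, MvPolynomial.eval_monomial_toFinsupp, mul_comm, a, monomialFun] using h
  refine (Pi.basisFun K (Sym ι m)).ext fun μ => ?_
  have := congr_arg (MvPolynomial.coeff (Multiset.toFinsupp (μ : Multiset ι))) hp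
  simpa [p, MvPolynomial.coeff_sum, MvPolynomial.coeff_monomial] using this

theorem finrank_span_range_tensorPow :
    finrank K (span K (Set.range (tensorPow m : (ι → K) → (Fin m → ι) → K))) =
      Fintype.card (Sym ι m) := by
  have hfactor : tensorPow m = LinearMap.funLeft K K symOfFn ∘ (monomialFun : (ι → K) → _) := by
    ext c g
    exact (monomialFun_symOfFn c g).symm
  rw [hfactor, Set.range_comp, span_image, span_range_monomialFun,
    ← (equivMapOfInjective _ (LinearMap.funLeft_injective_of_surjective _ _ _ symOfFn_surjective)
      _).finrank_eq, finrank_top, Module.finrank_fintype_fun_eq_card]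

theorem finrank_span_image_tensorPow [Fintype α] [DecidableEq α] (P : Submodule K (α → K)) :
    finrank K (span K (tensorPow m '' (P : Set (α → K)))) = (finrank K P + m - 1).choose m := by
  let B := P.subtype ∘ Module.finBasis K P
  have hB : LinearIndependent K B := (Module.finBasis K P).linearIndependent.map' _ P.ker_subtype
  have hP : (P : Set (α → K)) = Set.range (Fintype.linearCombination K B) := by
    rw [← LinearMap.coe_range, Fintype.range_linearCombination, Set.range_comp, span_image,
      (Module.finBasis K P).span_eq, map_subtype_top]
  have hfactor : tensorPow m ∘ Fintype.linearCombination K B =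
      Fintype.linearCombination K (fun g : Fin m → Fin (finrank K P) => tprodFun (B ∘ g)) ∘
        tensorPow m :=
    funext (tensorPow_linearCombination m B)
  rw [hP, ← Set.range_comp, hfactor, Set.range_comp, span_image,
    ← (equivMapOfInjective _ (linearIndependent_iff_injective_fintypeLinearCombination.1
      (hB.tprodFun_comp m)) _).finrank_eq,
    finrank_span_range_tensorPow, Sym.card_sym_eq_choose, Fintype.card_fin]

end Dimension

section Symmetrized

variable {R α ι : Type*} [CommSemiring R] {m : ℕ}

noncomputable def padRestrict (e : Fin m ↪ ι) (z : α) : ((ι → α) → R) →ₗ[R] ((Fin m → α) → R) :=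
  LinearMap.funLeft R R fun f₀ => extend e f₀ fun _ => z

variable [DecidableEq α] [Fintype ι] [DecidableEq ι]

def symmetrizedPow (m : ℕ) (z : α) (ψ : α → R) : (ι → α) → R :=
  ∑ S ∈ univ.filter (fun S : Finset ι => S.card = m),
    fun f => (∏ i ∈ S, ψ (f i)) * ∏ i ∈ Sᶜ, if f i = z then 1 else 0

theorem symmetrizedPow_apply (z : α) (ψ : α → R) (f : ι → α) :
    symmetrizedPow m z ψ f = ∑ S ∈ univ.filter (fun S : Finset ι => S.card = m),
      (∏ i ∈ S, ψ (f i)) * ∏ i ∈ Sᶜ, if f i = z then 1 else 0 := by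
  simp [symmetrizedPow]

theorem symmetrizedPow_comp_perm (z : α) (ψ : α → R) (σ : Equiv.Perm ι) (f : ι → α) :
    symmetrizedPow m z ψ (f ∘ σ) = symmetrizedPow m z ψ f := by
  simp only [symmetrizedPow_apply]
  refine sum_equiv σ.finsetCongr (by simp) fun S _ => ?_
  congr 1 <;> exact prod_equiv σ (by simp) (by simp)

theorem symmetrizedPow_eq_zero {z : α} {ψ : α → R} (hψ : ψ z = 0) {f : ι → α}
    (hf : #{i | f i ≠ z} ≠ m) : symmetrizedPow m z ψ f = 0 := by
  rw [symmetrizedPow_apply]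
  refine sum_eq_zero fun S hS => ?_
  obtain ⟨i, hi⟩ : ∃ i, ¬(i ∈ S ↔ f i ≠ z) := by
    by_contra! h
    exact hf (by rw [← (mem_filter_univ S).1 hS]; congr; ext i; simp [h])
  by_cases hiS : i ∈ S
  · exact mul_eq_zero_of_left (prod_eq_zero hiS (by simp_all)) _
  · exact mul_eq_zero_of_right _ (prod_eq_zero (mem_compl.2 hiS) (by simp_all))

variable (R ι) in
def symmetricOfWeight (m : ℕ) (z : α) : Submodule R ((ι → α) → R) where
  carrier := {v | (∀ (σ : Equiv.Perm ι) f, v (f ∘ σ) = v f) ∧ ∀ f, #{i | f i ≠ z} ≠ m → v f = 0}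
  add_mem' hu hv := ⟨fun σ f => by simp [hu.1 σ f, hv.1 σ f],
    fun f hf => by simp [hu.2 f hf, hv.2 f hf]⟩
  zero_mem' := ⟨fun _ _ => rfl, fun _ _ => rfl⟩
  smul_mem' a _ hv := ⟨fun σ f => by simp [hv.1 σ f], fun f hf => by simp [hv.2 f hf]⟩

theorem symmetrizedPow_mem_symmetricOfWeight {z : α} {ψ : α → R} (hψ : ψ z = 0) :
    symmetrizedPow m z ψ ∈ symmetricOfWeight R ι m z :=
  ⟨symmetrizedPow_comp_perm z ψ, fun _ => symmetrizedPow_eq_zero hψ⟩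

theorem padRestrict_symmetrizedPow (e : Fin m ↪ ι) {z : α} {ψ : α → R} (hψ : ψ z = 0) :
    padRestrict e z (symmetrizedPow m z ψ) = tensorPow m ψ := by
  ext f₀
  have hpad_off : ∀ i ∉ univ.map e, extend e f₀ (fun _ => z) i = z := fun i hi =>
    extend_apply' _ _ _ (by simpa using hi)
  have hS₀ : univ.map e ∈ univ.filter (fun S : Finset ι => S.card = m) := by simp
  rw [padRestrict, LinearMap.funLeft_apply, symmetrizedPow_apply, sum_eq_single_of_mem _ hS₀]
  · rw [prod_congr rfl fun i hi => if_pos (hpad_off i (mem_compl.1 hi)), prod_const_one, mul_one,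
      prod_map]
    exact prod_congr rfl fun j _ => by rw [e.injective.extend_apply]
  · intro S hS hne
    obtain ⟨i, hiS, hi⟩ := not_subset.1 fun hsub =>
      hne (eq_of_subset_of_card_le hsub
        (by rw [card_map, card_univ, Fintype.card_fin, (mem_filter_univ S).1 hS]))
    exact mul_eq_zero_of_left (prod_eq_zero hiS (by rw [hpad_off i hi, hψ])) _

theorem exists_perm_comp_eq_extend (e : Fin m ↪ ι) {z : α} {f : ι → α}
    (hf : #{i | f i ≠ z} = m) :
    ∃ σ : Equiv.Perm ι, f ∘ σ = extend e (f ∘ σ ∘ e) fun _ => z := by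
  obtain ⟨τ⟩ : Nonempty ({i // i ∈ univ.map e} ≃ {i // f i ≠ z}) := by
    rw [← Fintype.card_eq, Fintype.card_coe, Fintype.card_subtype, hf, card_map, card_univ,
      Fintype.card_fin]
  refine ⟨τ.extendSubtype, funext fun i => ?_⟩
  by_cases hi : i ∈ univ.map e
  · obtain ⟨j, -, rfl⟩ := mem_map.1 hi
    simp [e.injective.extend_apply]
  · rw [extend_apply' _ _ _ (by simpa using hi)]
    simpa using τ.extendSubtype_not_mem i hi

theorem disjoint_symmetricOfWeight_ker_padRestrict (e : Fin m ↪ ι) (z : α) :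
    Disjoint (symmetricOfWeight R ι m z) (LinearMap.ker (padRestrict e z)) := by
  rw [disjoint_def]
  intro v ⟨hperm, hweight⟩ hker
  ext f
  by_cases hf : #{i | f i ≠ z} = m
  · obtain ⟨σ, hσ⟩ := exists_perm_comp_eq_extend e hf
    rw [← hperm σ, hσ]
    exact congr_fun hker (f ∘ σ ∘ e)
  · exact hweight f hf

theorem finrank_span_image_symmetrizedPow {K : Type*} [Field K] [Infinite K] [Fintype α]
    (e : Fin m ↪ ι) {z : α} (P : Submodule K (α → K)) (hP : ∀ ψ ∈ P, ψ z = 0) :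
    finrank K (span K (symmetrizedPow (ι := ι) m z '' (P : Set (α → K)))) =
      (finrank K P + m - 1).choose m := by
  have hdisj : Disjoint (span K (symmetrizedPow (ι := ι) m z '' (P : Set (α → K))))
      (LinearMap.ker (padRestrict e z)) :=
    (disjoint_symmetricOfWeight_ker_padRestrict e z).mono_left <| span_le.2 <|
      Set.image_subset_iff.2 fun ψ hψ => symmetrizedPow_mem_symmetricOfWeight (hP ψ hψ)
  rw [← LinearMap.finrank_range_of_inj (LinearMap.injective_domRestrict_iff.2 hdisj),
    LinearMap.range_domRestrict, ← span_image, Set.image_image,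
    Set.image_congr fun ψ hψ => padRestrict_symmetrizedPow e (hP ψ hψ),
    finrank_span_image_tensorPow]

end Symmetrized

theorem dim_symmetrized_span_general (n m d : ℕ) (hmn : m ≤ n) (hd : 0 < d)
    (P₀ : Submodule ℂ (Fin d → ℂ)) (hP₀ : ∀ ψ ∈ P₀, ψ ⟨0, hd⟩ = 0) :
    Module.finrank ℂ
        (Submodule.span ℂ {v : (Fin n → Fin d) → ℂ |
          ∃ ψ ∈ P₀, v = ∑ S ∈ Finset.univ.filter (fun S : Finset (Fin n) => S.card = m),
            fun f : Fin n → Fin d =>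
              (∏ i ∈ S, ψ (f i)) * ∏ i ∈ Sᶜ, (if f i = ⟨0, hd⟩ then (1 : ℂ) else 0)}) =
      Nat.choose (Module.finrank ℂ P₀ + m - 1) m := by
  have hset : {v : (Fin n → Fin d) → ℂ | ∃ ψ ∈ P₀, v = symmetrizedPow m ⟨0, hd⟩ ψ} =
      symmetrizedPow m ⟨0, hd⟩ '' (P₀ : Set (Fin d → ℂ)) := by
    ext v
    simp [eq_comm]
  exact hset ▸ finrank_span_image_symmetrizedPow (Fin.castLEEmb hmn) P₀ hP₀

/-- Model `H^{⊗n}` with `H = ℂ^d` as functions `(Fin n → Fin d) → ℂ` on basis labels.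
Let `P₀` be a subspace of `span{|1⟩,…,|d−1⟩}` (i.e. every vector vanishes at
coordinate `0`).  Let `A` be the span of the symmetrized vectors
`Σ_{|S|=m} |ψ⟩^{⊗S} ⊗ |0⟩^{⊗([n]∖S)}` for `ψ ∈ P₀`.
Then `dim A = C(dim P₀ + m − 1, m)`. -/
theorem dim_symmetrized_span (n m d : ℕ) (hm : 0 < m) (hmn : m ≤ n) (hd : 0 < d)
    (P₀ : Submodule ℂ (Fin d → ℂ)) (hP₀ : ∀ ψ ∈ P₀, ψ ⟨0, hd⟩ = 0) :
    Module.finrank ℂ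
        (Submodule.span ℂ {v : (Fin n → Fin d) → ℂ |
          ∃ ψ ∈ P₀, v = ∑ S ∈ Finset.univ.filter (fun S : Finset (Fin n) => S.card = m),
            fun f : Fin n → Fin d =>
              (∏ i ∈ S, ψ (f i)) * ∏ i ∈ Sᶜ, (if f i = ⟨0, hd⟩ then (1 : ℂ) else 0)}) =
      Nat.choose (Module.finrank ℂ P₀ + m - 1) m :=
  dim_symmetrized_span_general n m d hmn hd P₀ hP₀
end

section
/- Let d₁, d₂, r be positive integers with d₁/d₂ ≤ r ≤ d₁·d₂. Then there exist linear operators K₁,…,K_r: ℂ^{d₁} → ℂ^{d₂} such that: (1) tr(Kᵢ† Kⱼ) = 0 for all i ≠ j; (2) tr(Kᵢ† Kᵢ) ≤ 2d₁/r for all i; and (3) Σᵢ Kᵢ† Kᵢ = I_{d₁}. -/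
/-!
Each `Kᵢ` is a weighted sum of matrix units `E_{xy}` ("cells"). Distinct operators use distinct
cells, which gives trace-orthogonality; no operator uses two cells in the same row, so `Kᵢᴴ Kᵢ` is
diagonal; and a cell in column `y` gets weight `1 / √(number of cells in column y)`, so that
`∑ Kᵢᴴ Kᵢ = 1` as soon as every column carries a cell.

With `N = max r d₁` and `μ = min r d₁`, cell `t < N` sits at row `t / μ` and column `t % d₁` and
belongs to `K_{t % r}`; the hypothesis `d₁ / d₂ ≤ r ≤ d₁ d₂` is exactly `N ≤ μ d₂`, which keeps the
rows below `d₂`. If `r ≥ d₁`, every operator has a single cell, in a column carrying at least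
`⌊r / d₁⌋` cells; if `r < d₁`, every column carries a single cell and every operator has at most
`⌈d₁ / r⌉` of them. Either way `tr (Kᵢᴴ Kᵢ) ≤ 2 d₁ / r`.
-/

open Matrix ComplexOrder Finset Function

namespace Matrix

variable {ι κ m n R : Type*} [DecidableEq m] [DecidableEq n]

section CellMatrix

variable [Fintype m] [Semiring R] [StarRing R] (row : ι → m) (col : ι → n) (w : ι → R)

lemma conjTranspose_single_mul_single (a a' : m) (b b' : n) (c c' : R) :
    (single a b c)ᴴ * single a' b' c' = if a = a' then single b b' (star c * c') else 0 := by
  rw [conjTranspose_single]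
  split_ifs with h
  · rw [h, single_mul_single_same]
  · exact single_mul_single_of_ne _ _ _ _ h _

def cellMatrix (s : Finset ι) : Matrix m n R :=
  ∑ t ∈ s, single (row t) (col t) (w t)

lemma conjTranspose_cellMatrix_mul_cellMatrix (s s' : Finset ι) :
    (cellMatrix row col w s)ᴴ * cellMatrix row col w s' =
      ∑ t ∈ s, ∑ t' ∈ s',
        if row t = row t' then single (col t) (col t') (star (w t) * w t') else 0 := by
  simp only [cellMatrix, conjTranspose_sum, Matrix.sum_mul, Matrix.mul_sum,
    conjTranspose_single_mul_single]
  exact sum_comm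

lemma trace_conjTranspose_cellMatrix_mul_cellMatrix [Fintype n] [DecidableEq ι]
    (hcell : Injective fun t ↦ (row t, col t)) (s s' : Finset ι) :
    ((cellMatrix row col w s)ᴴ * cellMatrix row col w s').trace =
      ∑ t ∈ s ∩ s', star (w t) * w t := by
  have hterm : ∀ t t', trace (if row t = row t' then
      single (col t) (col t') (star (w t) * w t') else 0) =
        if t = t' then star (w t) * w t else 0 := by
    intro t t'
    by_cases htt : t = t'
    · simp [htt]
    · have hcol : row t = row t' → col t ≠ col t' := fun hr hc ↦ htt (hcell (Prod.ext hr hc))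
      split_ifs with hr
      · exact trace_single_eq_of_ne _ _ _ (hcol hr)
      · exact trace_zero _ _
  simp only [conjTranspose_cellMatrix_mul_cellMatrix, trace_sum, hterm, sum_ite_eq]
  rw [← sum_filter, filter_mem_eq_inter]

lemma conjTranspose_cellMatrix_mul_self {s : Finset ι} (hrow : Set.InjOn row s) :
    (cellMatrix row col w s)ᴴ * cellMatrix row col w s =
      ∑ t ∈ s, single (col t) (col t) (star (w t) * w t) := by
  classical
  rw [conjTranspose_cellMatrix_mul_cellMatrix]
  refine sum_congr rfl fun t ht ↦ ?_
  rw [sum_eq_single_of_mem t ht fun t' ht' htt ↦ if_neg fun h ↦ htt (hrow ht' ht h.symm),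
    if_pos rfl]

end CellMatrix

lemma sum_single_inv_card_fiber [Fintype ι] [Fintype n] [DivisionSemiring R] [CharZero R]
    {col : ι → n} (hcol : Surjective col) :
    ∑ t, single (col t) (col t) ((#{t' | col t' = col t} : R)⁻¹) = 1 := by
  classical
  rw [← sum_fiberwise univ col, ← sum_single_one]
  refine sum_congr rfl fun y _ ↦ ?_
  have hpos : 0 < #{t' | col t' = y} := by
    obtain ⟨t, rfl⟩ := hcol y
    exact card_pos.2 ⟨t, by simp⟩
  rw [sum_congr rfl fun t ht ↦ by rw [(mem_filter.1 ht).2], sum_const, smul_single, nsmul_eq_mul,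
    mul_inv_cancel₀ (by exact_mod_cast hpos.ne')]

theorem exists_orthogonal_kraus_of_cells {𝕜 : Type*} [RCLike 𝕜] [Fintype ι] [Fintype κ]
    [DecidableEq κ] [Fintype m] [Fintype n] (row : ι → m) (col : ι → n) (kraus : ι → κ)
    (hcell : Injective fun t ↦ (row t, col t)) (hfiber : Injective fun t ↦ (kraus t, row t))
    (hcol : Surjective col) :
    ∃ K : κ → Matrix m n 𝕜,
      (∀ i j, i ≠ j → ((K i)ᴴ * K j).trace = 0) ∧
      (∀ i, ((K i)ᴴ * K i).trace =
        ((∑ t with kraus t = i, (#{t' | col t' = col t} : ℝ)⁻¹ : ℝ) : 𝕜)) ∧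
      ∑ i, (K i)ᴴ * K i = 1 := by
  classical
  set w : ι → 𝕜 := fun t ↦ ((√(#{t' | col t' = col t} : ℝ))⁻¹ : ℝ)
  have hw : ∀ t, star (w t) * w t = (((#{t' | col t' = col t} : ℝ)⁻¹ : ℝ) : 𝕜) := by
    intro t
    rw [RCLike.star_def, RCLike.conj_ofReal, ← RCLike.ofReal_mul, ← mul_inv,
      Real.mul_self_sqrt (Nat.cast_nonneg _)]
  have hrow : ∀ i, Set.InjOn row ({t | kraus t = i} : Finset ι) := fun i t ht t' ht' h ↦
    hfiber (Prod.ext ((mem_filter.1 ht).2.trans (mem_filter.1 ht').2.symm) h)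
  refine ⟨fun i ↦ cellMatrix row col w {t | kraus t = i}, fun i j hij ↦ ?_, fun i ↦ ?_, ?_⟩
  · have hdisj : Disjoint ({t | kraus t = i} : Finset ι) ({t | kraus t = j} : Finset ι) :=
      disjoint_filter.2 fun t _ hi hj ↦ hij (hi.symm.trans hj)
    rw [trace_conjTranspose_cellMatrix_mul_cellMatrix _ _ _ hcell,
      disjoint_iff_inter_eq_empty.1 hdisj, sum_empty]
  · rw [trace_conjTranspose_cellMatrix_mul_cellMatrix _ _ _ hcell, inter_self, RCLike.ofReal_sum]
    exact sum_congr rfl fun t _ ↦ hw t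
  · simp_rw [conjTranspose_cellMatrix_mul_self _ _ _ (hrow _), hw, sum_fiberwise univ kraus]
    push_cast
    exact sum_single_inv_card_fiber hcol

end Matrix

theorem Nat.eq_of_div_min_eq_of_mod_eq {a b t t' : ℕ} (ht : t < max a b) (ht' : t' < max a b)
    (hdiv : t / min a b = t' / min a b) (hmod : t % a = t' % a) : t = t' := by
  rcases le_total a b with h | h
  · rw [min_eq_left h] at hdiv
    rw [← Nat.div_add_mod t a, ← Nat.div_add_mod t' a, hdiv, hmod]
  · rw [max_eq_left h] at ht ht'
    rwa [Nat.mod_eq_of_lt ht, Nat.mod_eq_of_lt ht'] at hmod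

theorem Fin.card_filter_val_mod_eq (N : ℕ) {a v : ℕ} (hv : v < a) :
    #{t : Fin N | t.val % a = v} = N / a + if v < N % a then 1 else 0 := by
  have hcount := Nat.count_modEq_card (b := N) (Nat.zero_lt_of_lt hv) v
  rw [Nat.mod_eq_of_lt hv, Nat.count_eq_card_filter_range] at hcount
  rw [← hcount, ← card_map Fin.valEmbedding]
  congr 1
  ext x
  simp only [mem_map, mem_filter, mem_univ, true_and, Fin.valEmbedding_apply, mem_range, Nat.ModEq,
    Nat.mod_eq_of_lt hv]
  exact ⟨fun ⟨t, ht, htx⟩ ↦ htx ▸ ⟨t.2, ht⟩, fun ⟨hx, hxv⟩ ↦ ⟨⟨x, hx⟩, hxv, rfl⟩⟩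

theorem Fin.mul_card_filter_val_mod_le {r d i : ℕ} (hd : 0 < d) (hi : i < r) :
    r * #{t : Fin (max r d) | t.val % r = i} ≤ 2 * d * (max r d / d) := by
  have hr : 0 < r := Nat.zero_lt_of_lt hi
  rw [Fin.card_filter_val_mod_eq _ hi]
  rcases le_total d r with h | h
  · rw [max_eq_left h, Nat.div_self hr, Nat.mod_self, if_neg (Nat.not_lt_zero i)]
    have hq : 1 ≤ r / d := (Nat.one_le_div_iff hd).2 h
    have := Nat.lt_div_mul_add (a := r) hd
    nlinarith
  · rw [max_eq_right h, Nat.div_self hd]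
    have := Nat.div_mul_le_self d r
    split_ifs <;> nlinarith

theorem Fin.sum_inv_card_filter_val_mod_le {r d i : ℕ} (hd : 0 < d) (hi : i < r) :
    ∑ t : Fin (max r d) with t.val % r = i,
      (#{t' : Fin (max r d) | t'.val % d = t.val % d} : ℝ)⁻¹ ≤ 2 * d / r := by
  have hr : 0 < r := Nat.zero_lt_of_lt hi
  have hq : 0 < max r d / d := Nat.div_pos (le_max_right _ _) hd
  have hterm : ∀ t : Fin (max r d), (#{t' : Fin (max r d) | t'.val % d = t.val % d} : ℝ)⁻¹ ≤
      ((max r d / d : ℕ) : ℝ)⁻¹ := fun t ↦ by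
    refine inv_anti₀ (by positivity) ?_
    rw [Fin.card_filter_val_mod_eq _ (Nat.mod_lt _ hd)]
    exact_mod_cast Nat.le_add_right _ _
  calc _ ≤ #{t : Fin (max r d) | t.val % r = i} • ((max r d / d : ℕ) : ℝ)⁻¹ :=
        sum_le_card_nsmul _ _ _ fun t _ ↦ hterm t
    _ ≤ 2 * d / r := by
      rw [nsmul_eq_mul, ← div_eq_mul_inv, div_le_div_iff₀ (by positivity) (by positivity),
        mul_comm]
      exact_mod_cast Fin.mul_card_filter_val_mod_le hd hi

/-- For positive integers `d₁, d₂, r` with `d₁/d₂ ≤ r ≤ d₁·d₂`, there exist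
operators `K₁,…,K_r : ℂ^{d₁} → ℂ^{d₂}` that are pairwise trace-orthogonal,
each with `tr(Kᵢᴴ Kᵢ) ≤ 2d₁/r`, and with `Σᵢ Kᵢᴴ Kᵢ = I`. -/
theorem exists_balanced_orthogonal_kraus (d₁ d₂ r : ℕ)
    (hd₁ : 0 < d₁) (hd₂ : 0 < d₂) (hr : 0 < r)
    (hlow : (d₁ : ℝ) / d₂ ≤ r) (hhigh : r ≤ d₁ * d₂) :
    ∃ K : Fin r → Matrix (Fin d₂) (Fin d₁) ℂ,
      (∀ i j, i ≠ j → ((K i)ᴴ * K j).trace = 0) ∧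
      (∀ i, ((K i)ᴴ * K i).trace ≤ ((2 * d₁ / r : ℝ) : ℂ)) ∧
      (∑ i, (K i)ᴴ * K i = 1) := by
  have hmax : max r d₁ ≤ min r d₁ * d₂ := by
    have hlow' : d₁ ≤ r * d₂ := by exact_mod_cast (div_le_iff₀ (by positivity)).1 hlow
    rcases le_total r d₁ with h | h <;> simp [h, hhigh, hlow']
  let row : Fin (max r d₁) → Fin d₂ :=
    fun t ↦ ⟨t / min r d₁, Nat.div_lt_of_lt_mul (t.2.trans_le hmax)⟩
  let col : Fin (max r d₁) → Fin d₁ := fun t ↦ ⟨t % d₁, Nat.mod_lt _ hd₁⟩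
  let kraus : Fin (max r d₁) → Fin r := fun t ↦ ⟨t % r, Nat.mod_lt _ hr⟩
  have hcell : Injective fun t ↦ (row t, col t) := fun t t' h ↦ by
    simp only [Prod.mk.injEq, Fin.mk.injEq, row, col] at h
    exact Fin.ext (Nat.eq_of_div_min_eq_of_mod_eq (t.2.trans_eq (max_comm _ _))
      (t'.2.trans_eq (max_comm _ _)) (by rw [min_comm]; exact h.1) h.2)
  have hfiber : Injective fun t ↦ (kraus t, row t) := fun t t' h ↦ by
    simp only [Prod.mk.injEq, Fin.mk.injEq, row, kraus] at h
    exact Fin.ext (Nat.eq_of_div_min_eq_of_mod_eq t.2 t'.2 h.2 h.1)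
  have hcol : Surjective col := fun y ↦
    ⟨⟨y, y.2.trans_le (le_max_right _ _)⟩, Fin.ext (Nat.mod_eq_of_lt y.2)⟩
  obtain ⟨K, horth, htrace, hsum⟩ :=
    exists_orthogonal_kraus_of_cells (𝕜 := ℂ) row col kraus hcell hfiber hcol
  refine ⟨K, horth, fun i ↦ ?_, hsum⟩
  rw [htrace i]
  norm_cast
  simpa [row, col, kraus, Fin.ext_iff] using Fin.sum_inv_card_filter_val_mod_le hd₁ i.2
end
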